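/- arXiv:2408.04858 — 3 statements merged into one kernel-verified Lean document; each statement's English description precedes it below -/
import Mathlib

section
/- The map f on the closed upper hemisphere S²₊ defined by halving the polar angle, f(sin φ cos θ, sin φ sin θ, cos φ) = (sin(φ/2) cos θ, sin(φ/2) sin θ, cos(φ/2)), is a bi-Lipschitz contraction: there exist constants 0 < c ≤ r < 1 such that c·d(p,q) ≤ d(f(p),f(q)) ≤ r·d(p,q) for all p,q ∈ S²₊, where d is the spherical distance. -/
open Real

set_option maxHeartbeats 1000000

/-- A point of the closed upper hemisphere `S²₊` with polar angle `φ ∈ [0,π/2]`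
and azimuth `θ`. -/
noncomputable def hemPt (φ θ : ℝ) : ℝ × ℝ × ℝ :=
  (Real.sin φ * Real.cos θ, Real.sin φ * Real.sin θ, Real.cos φ)

/-- Euclidean inner product on `ℝ³`. -/
def dot3 (p q : ℝ × ℝ × ℝ) : ℝ := p.1 * q.1 + p.2.1 * q.2.1 + p.2.2 * q.2.2

/-- Great-circle distance on the unit sphere. -/
noncomputable def sphDist (p q : ℝ × ℝ × ℝ) : ℝ := Real.arccos (dot3 p q)

lemma cos_eq_one_sub (x : ℝ) : Real.cos x = 1 - 2 * Real.sin (x / 2) ^ 2 := by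
  have h : x = 2 * (x / 2) := by ring
  have h2 := Real.cos_two_mul (x / 2)
  have h3 := Real.sin_sq_add_cos_sq (x / 2)
  nlinarith [h2, h3, congrArg Real.cos h]

lemma dot_formula (φ₁ θ₁ φ₂ θ₂ : ℝ) :
    dot3 (hemPt φ₁ θ₁) (hemPt φ₂ θ₂) =
      Real.cos φ₁ * Real.cos φ₂ + Real.sin φ₁ * Real.sin φ₂ * Real.cos (θ₁ - θ₂) := by
  simp only [dot3, hemPt, Real.cos_sub]
  ring

lemma dot_mem (φ₁ θ₁ φ₂ θ₂ : ℝ) :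
    -1 ≤ dot3 (hemPt φ₁ θ₁) (hemPt φ₂ θ₂) ∧ dot3 (hemPt φ₁ θ₁) (hemPt φ₂ θ₂) ≤ 1 := by
  rw [dot_formula]
  have h1 := Real.sin_sq_add_cos_sq φ₁
  have h2 := Real.sin_sq_add_cos_sq φ₂
  have h3 := Real.neg_one_le_cos (θ₁ - θ₂)
  have h4 := Real.cos_le_one (θ₁ - θ₂)
  constructor
  · nlinarith [sq_nonneg (Real.cos φ₁ + Real.cos φ₂), sq_nonneg (Real.sin φ₁ + Real.sin φ₂),
      sq_nonneg (Real.cos φ₁ - Real.cos φ₂), sq_nonneg (Real.sin φ₁ - Real.sin φ₂),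
      sq_nonneg (Real.sin φ₁ * Real.sin φ₂)]
  · nlinarith [sq_nonneg (Real.cos φ₁ + Real.cos φ₂), sq_nonneg (Real.sin φ₁ + Real.sin φ₂),
      sq_nonneg (Real.cos φ₁ - Real.cos φ₂), sq_nonneg (Real.sin φ₁ - Real.sin φ₂),
      sq_nonneg (Real.sin φ₁ * Real.sin φ₂)]

/-- Haversine formula. -/
lemma hav_formula (φ₁ θ₁ φ₂ θ₂ : ℝ) :
    Real.sin (sphDist (hemPt φ₁ θ₁) (hemPt φ₂ θ₂) / 2) ^ 2 =
      Real.sin ((φ₁ - φ₂) / 2) ^ 2 +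
        Real.sin φ₁ * Real.sin φ₂ * Real.sin ((θ₁ - θ₂) / 2) ^ 2 := by
  obtain ⟨hl, hu⟩ := dot_mem φ₁ θ₁ φ₂ θ₂
  have hc : Real.cos (sphDist (hemPt φ₁ θ₁) (hemPt φ₂ θ₂)) =
      dot3 (hemPt φ₁ θ₁) (hemPt φ₂ θ₂) := Real.cos_arccos hl hu
  have e1 := cos_eq_one_sub (sphDist (hemPt φ₁ θ₁) (hemPt φ₂ θ₂))
  have e2 := cos_eq_one_sub (φ₁ - φ₂)
  have e3 := cos_eq_one_sub (θ₁ - θ₂)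
  have hsub : Real.cos (φ₁ - φ₂) = Real.cos φ₁ * Real.cos φ₂ + Real.sin φ₁ * Real.sin φ₂ :=
    Real.cos_sub φ₁ φ₂
  rw [dot_formula] at hc
  have e4 : Real.sin φ₁ * Real.sin φ₂ * Real.cos (θ₁ - θ₂) =
      Real.sin φ₁ * Real.sin φ₂ - 2 * (Real.sin φ₁ * Real.sin φ₂) * Real.sin ((θ₁ - θ₂) / 2) ^ 2 := by
    rw [e3]; ring
  nlinarith [hc, e1, e2, hsub, e4]

/-- Concavity of sin: `a * sin x ≤ sin (a * x)` for `a ∈ [0,1]`, `x ∈ [0,π]`. -/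
lemma mul_sin_le (a x : ℝ) (ha0 : 0 ≤ a) (ha1 : a ≤ 1) (hx0 : 0 ≤ x) (hxπ : x ≤ π) :
    a * Real.sin x ≤ Real.sin (a * x) := by
  obtain ⟨-, hcc⟩ := strictConcaveOn_sin_Icc.concaveOn
  have h := hcc (x := x) (y := 0) ⟨hx0, hxπ⟩ ⟨le_rfl, Real.pi_pos.le⟩
    (a := a) (b := 1 - a) ha0 (by linarith) (by ring)
  simpa using h

/-- Deduce the bi-Lipschitz bounds from the two haversine inequalities. -/
lemma final_bounds (D D' : ℝ) (hD0 : 0 ≤ D) (hDπ : D ≤ π) (hD'0 : 0 ≤ D') (hD'π : D' ≤ π)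
    (ineqA : Real.sin (D / 2) ^ 2 ≤ 4 * Real.sin (D' / 2) ^ 2)
    (ineqB : 2 * Real.sin (D' / 2) ^ 2 ≤ Real.sin (D / 2) ^ 2) :
    1 / π * D ≤ D' ∧ D' ≤ Real.sqrt 2 / 2 * D := by
  have s2 : (0:ℝ) < Real.sqrt 2 := Real.sqrt_pos.2 (by norm_num)
  have s2sq : Real.sqrt 2 ^ 2 = 2 := Real.sq_sqrt (by norm_num)
  have s2lt : Real.sqrt 2 < 2 := by nlinarith
  have hπ := Real.pi_pos
  have hsDhalf : 0 ≤ Real.sin (D / 2) :=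
    Real.sin_nonneg_of_nonneg_of_le_pi (by linarith) (by linarith)
  have hsD'half : 0 ≤ Real.sin (D' / 2) :=
    Real.sin_nonneg_of_nonneg_of_le_pi (by linarith) (by linarith)
  constructor
  · have j : 2 / π * (D / 2) ≤ Real.sin (D / 2) := Real.mul_le_sin (by linarith) (by linarith)
    have k : Real.sin (D / 2) ≤ 2 * Real.sin (D' / 2) := by nlinarith
    have l : Real.sin (D' / 2) ≤ D' / 2 := Real.sin_le (by linarith)
    calc 1 / π * D = 2 / π * (D / 2) := by ring
      _ ≤ Real.sin (D / 2) := j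
      _ ≤ 2 * Real.sin (D' / 2) := k
      _ ≤ D' := by linarith
  · have k : Real.sqrt 2 * Real.sin (D' / 2) ≤ Real.sin (D / 2) := by
      nlinarith [mul_nonneg s2.le hsD'half]
    have k2 : Real.sin (D' / 2) ≤ Real.sqrt 2 / 2 * Real.sin (D / 2) := by nlinarith
    have conc : Real.sqrt 2 / 2 * Real.sin (D / 2) ≤ Real.sin (Real.sqrt 2 / 2 * (D / 2)) :=
      mul_sin_le _ _ (by positivity) (by linarith) (by linarith) (by linarith)
    have mem1 : D' / 2 ∈ Set.Icc (-(π / 2)) (π / 2) := ⟨by linarith, by linarith⟩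
    have mem2 : Real.sqrt 2 / 2 * (D / 2) ∈ Set.Icc (-(π / 2)) (π / 2) := by
      have h0 : 0 ≤ Real.sqrt 2 / 2 * (D / 2) := by positivity
      exact ⟨by linarith, by nlinarith⟩
    have final : D' / 2 ≤ Real.sqrt 2 / 2 * (D / 2) :=
      (Real.strictMonoOn_sin.le_iff_le mem1 mem2).mp (by linarith)
    linarith

/-- the polar-angle-halving map on the closed upper hemisphere is a
bi-Lipschitz contraction: there are `0 < c ≤ r < 1` with
`c·d(p,q) ≤ d(f(p),f(q)) ≤ r·d(p,q)` for all `p,q ∈ S²₊`. -/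
theorem halving_map_biLipschitz :
    ∃ c r : ℝ, 0 < c ∧ c ≤ r ∧ r < 1 ∧
      ∀ φ₁ θ₁ φ₂ θ₂ : ℝ, φ₁ ∈ Set.Icc 0 (π / 2) → φ₂ ∈ Set.Icc 0 (π / 2) →
        c * sphDist (hemPt φ₁ θ₁) (hemPt φ₂ θ₂) ≤
            sphDist (hemPt (φ₁ / 2) θ₁) (hemPt (φ₂ / 2) θ₂) ∧
          sphDist (hemPt (φ₁ / 2) θ₁) (hemPt (φ₂ / 2) θ₂) ≤
            r * sphDist (hemPt φ₁ θ₁) (hemPt φ₂ θ₂) := by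
  have s2 : (0:ℝ) < Real.sqrt 2 := Real.sqrt_pos.2 (by norm_num)
  have s2sq : Real.sqrt 2 ^ 2 = 2 := Real.sq_sqrt (by norm_num)
  have s2lt : Real.sqrt 2 < 2 := by nlinarith
  have s2gt : 1 < Real.sqrt 2 := by nlinarith
  refine ⟨1 / π, Real.sqrt 2 / 2, by positivity, ?_, by linarith, ?_⟩
  · -- 1/π ≤ √2/2
    have : (2:ℝ) < π := by have := Real.pi_gt_three; linarith
    rw [div_le_div_iff₀ Real.pi_pos (by norm_num)]
    nlinarith
  intro φ₁ θ₁ φ₂ θ₂ h₁ h₂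
  obtain ⟨h₁0, h₁π⟩ := h₁
  obtain ⟨h₂0, h₂π⟩ := h₂
  set D := sphDist (hemPt φ₁ θ₁) (hemPt φ₂ θ₂) with hD
  set D' := sphDist (hemPt (φ₁ / 2) θ₁) (hemPt (φ₂ / 2) θ₂) with hD'
  have hD0 : 0 ≤ D := Real.arccos_nonneg _
  have hDπ : D ≤ π := Real.arccos_le_pi _
  have hD'0 : 0 ≤ D' := Real.arccos_nonneg _
  have hD'π : D' ≤ π := Real.arccos_le_pi _
  have H := hav_formula φ₁ θ₁ φ₂ θ₂
  have H' := hav_formula (φ₁ / 2) θ₁ (φ₂ / 2) θ₂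
  rw [← hD] at H; rw [← hD'] at H'
  have hq : (φ₁ / 2 - φ₂ / 2) / 2 = (φ₁ - φ₂) / 4 := by ring
  rw [hq] at H'
  clear_value D D'
  clear hD hD'
  -- abbreviations
  have hsin1 : Real.sin φ₁ = 2 * Real.sin (φ₁ / 2) * Real.cos (φ₁ / 2) := by
    rw [← Real.sin_two_mul]; congr 1; ring
  have hsin2 : Real.sin φ₂ = 2 * Real.sin (φ₂ / 2) * Real.cos (φ₂ / 2) := by
    rw [← Real.sin_two_mul]; congr 1; ring
  have hsinΔ : Real.sin ((φ₁ - φ₂) / 2) = 2 * Real.sin ((φ₁ - φ₂) / 4) * Real.cos ((φ₁ - φ₂) / 4) := by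
    rw [← Real.sin_two_mul]; congr 1; ring
  -- cosine bounds
  have hcos_bd : ∀ x : ℝ, |x| ≤ π / 4 → Real.sqrt 2 / 2 ≤ Real.cos x := by
    intro x hx
    have h4 : π / 4 ≤ π := by linarith [Real.pi_pos]
    have := Real.cos_le_cos_of_nonneg_of_le_pi (abs_nonneg x) h4 hx
    rw [Real.cos_abs, Real.cos_pi_div_four] at this
    linarith
  have hc1 : Real.sqrt 2 / 2 ≤ Real.cos (φ₁ / 2) := by
    apply hcos_bd; rw [abs_of_nonneg (by linarith)]; linarith
  have hc2 : Real.sqrt 2 / 2 ≤ Real.cos (φ₂ / 2) := by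
    apply hcos_bd; rw [abs_of_nonneg (by linarith)]; linarith
  have habs : |φ₁ - φ₂| ≤ π / 2 := abs_sub_le_iff.mpr ⟨by linarith, by linarith⟩
  have hcΔ : Real.sqrt 2 / 2 ≤ Real.cos ((φ₁ - φ₂) / 4) := by
    apply hcos_bd
    calc |(φ₁ - φ₂) / 4| = |φ₁ - φ₂| / 4 := by rw [abs_div]; norm_num
      _ ≤ π / 4 := by linarith [Real.pi_pos]
  have hc1' : Real.cos (φ₁ / 2) ≤ 1 := Real.cos_le_one _
  have hc2' : Real.cos (φ₂ / 2) ≤ 1 := Real.cos_le_one _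
  have hcΔ' : Real.cos ((φ₁ - φ₂) / 4) ≤ 1 := Real.cos_le_one _
  have hs1 : 0 ≤ Real.sin (φ₁ / 2) := Real.sin_nonneg_of_nonneg_of_le_pi (by linarith)
    (by linarith [Real.pi_pos])
  have hs2 : 0 ≤ Real.sin (φ₂ / 2) := Real.sin_nonneg_of_nonneg_of_le_pi (by linarith)
    (by linarith [Real.pi_pos])
  have hsθ : (0:ℝ) ≤ Real.sin ((θ₁ - θ₂) / 2) ^ 2 := sq_nonneg _
  have hsDhalf : 0 ≤ Real.sin (D / 2) :=
    Real.sin_nonneg_of_nonneg_of_le_pi (by linarith) (by linarith)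
  have hsD'half : 0 ≤ Real.sin (D' / 2) :=
    Real.sin_nonneg_of_nonneg_of_le_pi (by linarith) (by linarith)
  -- Inequality A : sin(D/2)^2 ≤ 4 sin(D'/2)^2
  have ineqA : Real.sin (D / 2) ^ 2 ≤ 4 * Real.sin (D' / 2) ^ 2 := by
    rw [H, H', hsin1, hsin2, hsinΔ]
    have hcΔ0 : 0 ≤ Real.cos ((φ₁ - φ₂) / 4) := by linarith
    have hc10 : 0 ≤ Real.cos (φ₁ / 2) := by linarith
    have hc20 : 0 ≤ Real.cos (φ₂ / 2) := by linarith
    have hcc1 : Real.cos (φ₁ / 2) * Real.cos (φ₂ / 2) ≤ 1 := by nlinarith [hc10, hc20, hc1', hc2']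
    have hcΔsq : Real.cos ((φ₁ - φ₂) / 4) ^ 2 ≤ 1 := by nlinarith [hcΔ0, hcΔ']
    linarith [mul_nonneg (sq_nonneg (Real.sin ((φ₁ - φ₂) / 4))) (sub_nonneg.mpr hcΔsq),
      mul_nonneg (mul_nonneg (mul_nonneg hs1 hs2) hsθ) (sub_nonneg.mpr hcc1)]
  -- Inequality B : 2 sin(D'/2)^2 ≤ sin(D/2)^2
  have ineqB : 2 * Real.sin (D' / 2) ^ 2 ≤ Real.sin (D / 2) ^ 2 := by
    rw [H, H', hsin1, hsin2, hsinΔ]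
    have hcc : 1 / 2 ≤ Real.cos (φ₁ / 2) * Real.cos (φ₂ / 2) := by nlinarith [hc1, hc2, s2sq, s2.le]
    have hccΔ : 1 / 2 ≤ Real.cos ((φ₁ - φ₂) / 4) ^ 2 := by nlinarith [hcΔ, s2sq, s2.le]
    linarith [mul_nonneg (sq_nonneg (Real.sin ((φ₁ - φ₂) / 4))) (by linarith : (0:ℝ) ≤ Real.cos ((φ₁ - φ₂) / 4) ^ 2 - 1 / 2),
      mul_nonneg (mul_nonneg (mul_nonneg hs1 hs2) hsθ) (by linarith : (0:ℝ) ≤ Real.cos (φ₁ / 2) * Real.cos (φ₂ / 2) - 1 / 2)]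
  exact final_bounds D D' hD0 hDπ hD'0 hD'π ineqA ineqB
end

section
/- Let D = {(sin φ cos θ, sin φ sin θ, cos φ) : θ ∈ [0,π/2], φ ∈ [0,π/2]} ⊂ S², f₁ the polar-angle-halving map restricted to D, R_y(π/4) the rotation about the y-axis by angle π/4 and R_x(−π/4) the rotation about the x-axis by −π/4. Then each of f₁, f₂ = R_y(π/4)∘f₁ and f₃ = R_x(−π/4)∘f₁ maps D into D. -/
open Real

/-- The region `D = {(sin φ cos θ, sin φ sin θ, cos φ) : θ ∈ [0,π/2], φ ∈ [0,π/2]}`. -/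
noncomputable def regionD : Set (ℝ × ℝ × ℝ) :=
  {p | ∃ φ ∈ Set.Icc (0 : ℝ) (π / 2), ∃ θ ∈ Set.Icc (0 : ℝ) (π / 2), p = hemPt φ θ}

/-- Rotation about the `y`-axis through angle `α`. -/
noncomputable def rotY (α : ℝ) (p : ℝ × ℝ × ℝ) : ℝ × ℝ × ℝ :=
  (p.1 * Real.cos α + p.2.2 * Real.sin α, p.2.1, -p.1 * Real.sin α + p.2.2 * Real.cos α)

/-- Rotation about the `x`-axis through angle `α`. -/
noncomputable def rotX (α : ℝ) (p : ℝ × ℝ × ℝ) : ℝ × ℝ × ℝ :=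
  (p.1, p.2.1 * Real.cos α - p.2.2 * Real.sin α, p.2.1 * Real.sin α + p.2.2 * Real.cos α)


/-- Any point of the closed first octant of the unit sphere has spherical
coordinates with `φ, θ ∈ [0, π/2]`. -/
lemma octant_mem' {x y z : ℝ} (hx : 0 ≤ x) (hy : 0 ≤ y) (hz : 0 ≤ z)
    (hn : x ^ 2 + y ^ 2 + z ^ 2 = 1) :
    ∃ φ ∈ Set.Icc (0 : ℝ) (π / 2), ∃ θ ∈ Set.Icc (0 : ℝ) (π / 2),
      Real.sin φ * Real.cos θ = x ∧ Real.sin φ * Real.sin θ = y ∧ Real.cos φ = z := by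
  have hz1 : z ≤ 1 := by nlinarith
  set φ := Real.arccos z with hφdef
  have hφ0 : 0 ≤ φ := Real.arccos_nonneg z
  have hφle : φ ≤ π / 2 := Real.arccos_le_pi_div_two.2 hz
  have hcos : Real.cos φ = z := Real.cos_arccos (by linarith) hz1
  have hsin : Real.sin φ = Real.sqrt (x ^ 2 + y ^ 2) := by
    rw [hφdef, Real.sin_arccos]
    congr 1; nlinarith
  set r := Real.sqrt (x ^ 2 + y ^ 2) with hrdef
  have hr0 : 0 ≤ r := Real.sqrt_nonneg _
  have hr2 : r ^ 2 = x ^ 2 + y ^ 2 := Real.sq_sqrt (by positivity)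
  rcases eq_or_lt_of_le hr0 with hr | hr
  · have hx0 : x = 0 := by nlinarith
    have hy0 : y = 0 := by nlinarith
    exact ⟨φ, ⟨hφ0, hφle⟩, 0, ⟨le_refl _, by positivity⟩,
      by simp [hsin, ← hr, hx0], by simp [hy0], hcos⟩
  · have hxr : x ≤ r := by nlinarith
    have hxr1 : x / r ≤ 1 := by
      rw [div_le_one hr]; exact hxr
    have hxr0 : 0 ≤ x / r := by positivity
    set θ := Real.arccos (x / r) with hθdef
    have hθ0 : 0 ≤ θ := Real.arccos_nonneg _
    have hθle : θ ≤ π / 2 := Real.arccos_le_pi_div_two.2 hxr0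
    have hcosθ : Real.cos θ = x / r := Real.cos_arccos (by linarith) hxr1
    have hsinθ : Real.sin θ = y / r := by
      rw [hθdef, Real.sin_arccos]
      rw [show 1 - (x / r) ^ 2 = (y / r) ^ 2 by field_simp; nlinarith]
      exact Real.sqrt_sq (by positivity)
    refine ⟨φ, ⟨hφ0, hφle⟩, θ, ⟨hθ0, hθle⟩, ?_, ?_, hcos⟩
    · rw [hsin, hcosθ]; field_simp
    · rw [hsin, hsinθ]; field_simp

lemma octant_mem {x y z : ℝ} (hx : 0 ≤ x) (hy : 0 ≤ y) (hz : 0 ≤ z)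
    (hn : x ^ 2 + y ^ 2 + z ^ 2 = 1) : (x, y, z) ∈ regionD := by
  obtain ⟨φ, hφ, θ, hθ, h1, h2, h3⟩ := octant_mem' hx hy hz hn
  exact ⟨φ, hφ, θ, hθ, by simp [hemPt, h1, h2, h3]⟩

/-- the polar-angle-halving map `f₁` on `D`, as well as
`f₂ = R_y(π/4)∘f₁` and `f₃ = R_x(−π/4)∘f₁`, all map `D` into `D`. -/
theorem maps_into_D :
    ∀ φ ∈ Set.Icc (0 : ℝ) (π / 2), ∀ θ ∈ Set.Icc (0 : ℝ) (π / 2),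
      hemPt (φ / 2) θ ∈ regionD ∧
      rotY (π / 4) (hemPt (φ / 2) θ) ∈ regionD ∧
      rotX (-(π / 4)) (hemPt (φ / 2) θ) ∈ regionD := by
  intro φ hφ θ hθ
  obtain ⟨hφ0, hφ1⟩ := hφ
  obtain ⟨hθ0, hθ1⟩ := hθ
  have hψ0 : 0 ≤ φ / 2 := by linarith
  have hψ1 : φ / 2 ≤ π / 4 := by linarith
  have hψ1' : φ / 2 ≤ π / 2 := by linarith [Real.pi_pos]
  have hsψ : 0 ≤ Real.sin (φ / 2) := Real.sin_nonneg_of_nonneg_of_le_pi hψ0 (by linarith [Real.pi_pos])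
  have hcψ : 0 ≤ Real.cos (φ / 2) := Real.cos_nonneg_of_mem_Icc ⟨by linarith [Real.pi_pos], hψ1'⟩
  have hsθ : 0 ≤ Real.sin θ := Real.sin_nonneg_of_nonneg_of_le_pi hθ0 (by linarith [Real.pi_pos])
  have hcθ : 0 ≤ Real.cos θ := Real.cos_nonneg_of_mem_Icc ⟨by linarith [Real.pi_pos], hθ1⟩
  -- on [0, π/4], sin ≤ cos
  have hsc : Real.sin (φ / 2) ≤ Real.cos (φ / 2) := by
    rw [← Real.cos_pi_div_two_sub]
    apply Real.cos_le_cos_of_nonneg_of_le_pi hψ0 (by linarith [Real.pi_pos])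
    linarith
  have hsθ1 : Real.sin θ ≤ 1 := Real.sin_le_one θ
  have hcθ1 : Real.cos θ ≤ 1 := Real.cos_le_one θ
  have hpy : Real.sin (π / 4) = Real.cos (π / 4) := by
    rw [Real.sin_pi_div_four, Real.cos_pi_div_four]
  have hc4 : Real.cos (π / 4) = Real.sqrt 2 / 2 := Real.cos_pi_div_four
  have hs4 : Real.sin (π / 4) = Real.sqrt 2 / 2 := Real.sin_pi_div_four
  have hc40 : (0:ℝ) ≤ Real.sqrt 2 / 2 := by positivity
  have hpyth : Real.sin (φ/2) ^ 2 + Real.cos (φ/2) ^ 2 = 1 := Real.sin_sq_add_cos_sq _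
  have hpythθ : Real.sin θ ^ 2 + Real.cos θ ^ 2 = 1 := Real.sin_sq_add_cos_sq θ
  have h2 : Real.sqrt 2 ^ 2 = 2 := Real.sq_sqrt (by norm_num)
  refine ⟨⟨φ/2, ⟨hψ0, hψ1'⟩, θ, ⟨hθ0, hθ1⟩, rfl⟩, ?_, ?_⟩
  · have hc2 : (Real.sqrt 2 / 2 : ℝ) ^ 2 = 1 / 2 := by rw [div_pow, h2]; norm_num
    have hle : Real.sin (φ/2) * Real.cos θ ≤ Real.cos (φ/2) :=
      le_trans (mul_le_of_le_one_right hsψ hcθ1) hsc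
    simp only [rotY, hemPt, hc4, hs4]
    apply octant_mem
    · nlinarith [mul_nonneg (mul_nonneg hsψ hcθ) hc40, mul_nonneg hcψ hc40]
    · exact mul_nonneg hsψ hsθ
    · nlinarith [hle, hc40]
    · linear_combination (2 * ((Real.sin (φ/2))^2 * (Real.cos θ)^2 + (Real.cos (φ/2))^2)) * hc2 +
        (Real.sin (φ/2))^2 * hpythθ + hpyth
  · have hc2 : (Real.sqrt 2 / 2 : ℝ) ^ 2 = 1 / 2 := by rw [div_pow, h2]; norm_num
    have hle : Real.sin (φ/2) * Real.sin θ ≤ Real.cos (φ/2) :=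
      le_trans (mul_le_of_le_one_right hsψ hsθ1) hsc
    simp only [rotX, hemPt, Real.cos_neg, Real.sin_neg, hc4, hs4]
    apply octant_mem
    · exact mul_nonneg hsψ hcθ
    · nlinarith [mul_nonneg (mul_nonneg hsψ hsθ) hc40, mul_nonneg hcψ hc40]
    · nlinarith [hle, hc40]
    · linear_combination (2 * ((Real.sin (φ/2))^2 * (Real.sin θ)^2 + (Real.cos (φ/2))^2)) * hc2 +
        (Real.sin (φ/2))^2 * hpythθ + hpyth
end

section
/- Let μ be the invariant (self-similar) probability measure of an iterated function system {f_i}_{i=1}^m of bi-Lipschitz contractions on the closure of a bounded open subset of a complete Riemannian n-manifold, and suppose the attractor K is not a singleton. Then μ is upper s-regular for some s > 0: there exists C > 0 such that μ(B(x,r)) ≤ C r^s for all x and all small r > 0; in particular the lower L∞-dimension of μ is strictly positive. -/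
/-
Let `R < 1`, `c > 0`, `π > 0` bound all `r i` from above and all `c i`, `p i` from below. Fix a
word length `n + 1` so large that two level-`(n + 1)` pieces `f_u K`, `f_v K` of the attractor lie
at distance `≥ 2ε`; every ball of radius `ε` then misses one of them. Expanding `μ` over the words
of length `n + 1`, a ball of radius `ε q ^ (j + 1)`, `q = c ^ (n + 1) / 2`, has a null preimage
under one word map and, under every other one, a preimage (inside `K`) contained in a ball of
radius `ε q ^ j`; the weights of the other words add up to at most `γ = 1 - π ^ (n + 1)`. Hence
`μ (ball x (ε q ^ j)) ≤ γ ^ j`, i.e. `μ (ball x ρ) ≲ ρ ^ s` with `s = log γ / log q > 0`.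
The `liminf` also needs the bound `⨆ x, μ (ball x δ) ≳ δ ^ M`, without which it could be the
junk value `0` of an unbounded `liminf`: the `m ^ n` balls of radius `≈ R ^ n diam K` around the
images of one point of `K` under the words of length `n` cover `K`.
-/

open MeasureTheory Metric Filter Set Topology
open scoped ENNReal

section

variable {X ι : Type*}

theorem exists_mem_Ioo_forall_lt [Finite ι] {x : ι → ℝ} {a b : ℝ} (hab : a < b)
    (hx : ∀ i, x i < b) : ∃ y ∈ Ioo a b, ∀ i, x i < y :=
  ((eventually_all.2 fun i => Ioo_mem_nhdsLT (hx i)).and (Ioo_mem_nhdsLT hab)).exists.imp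
    fun _ h => ⟨h.2, fun i => (h.1 i).1⟩

theorem exists_mem_Ioo_forall_gt [Finite ι] {x : ι → ℝ} {a b : ℝ} (hab : a < b)
    (hx : ∀ i, a < x i) : ∃ y ∈ Ioo a b, ∀ i, y < x i :=
  ((eventually_all.2 fun i => Ioo_mem_nhdsGT (hx i)).and (Ioo_mem_nhdsGT hab)).exists.imp
    fun _ h => ⟨h.2, fun i => (h.1 i).2⟩

theorem exists_mul_pow_succ_lt_le {a q ρ : ℝ} (hq₀ : 0 < q) (hq₁ : q < 1) (hρ₀ : 0 < ρ)
    (hρa : ρ ≤ a) : ∃ n : ℕ, a * q ^ (n + 1) < ρ ∧ ρ ≤ a * q ^ n := by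
  have ha : 0 < a := hρ₀.trans_le hρa
  obtain ⟨n, hlt, hle⟩ :=
    exists_nat_pow_near_of_lt_one (div_pos hρ₀ ha) ((div_le_one ha).2 hρa) hq₀ hq₁
  exact ⟨n, by rwa [lt_div_iff₀' ha] at hlt, by rwa [div_le_iff₀' ha] at hle⟩

namespace Monotone

variable {F : ℝ → ℝ≥0∞} {a q s ρ : ℝ}

theorem le_ofReal_rpow_of_forall_le (hF : Monotone F) (hq₀ : 0 < q) (hq₁ : q < 1) (hs : 0 ≤ s)
    (h : ∀ n : ℕ, F (a * q ^ n) ≤ ENNReal.ofReal ((q ^ n) ^ s)) (hρ₀ : 0 < ρ) (hρa : ρ ≤ a) :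
    F ρ ≤ ENNReal.ofReal ((a * q) ^ (-s) * ρ ^ s) := by
  obtain ⟨n, hlt, hle⟩ := exists_mul_pow_succ_lt_le hq₀ hq₁ hρ₀ hρa
  have haq : 0 < a * q := mul_pos (hρ₀.trans_le hρa) hq₀
  have hqn : q ^ n ≤ ρ / (a * q) := by
    rw [le_div_iff₀ haq]; linarith [show a * q ^ (n + 1) = q ^ n * (a * q) by ring]
  calc F ρ ≤ F (a * q ^ n) := hF hle
    _ ≤ ENNReal.ofReal ((q ^ n) ^ s) := h n
    _ ≤ ENNReal.ofReal ((ρ / (a * q)) ^ s) := by gcongr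
    _ = ENNReal.ofReal ((a * q) ^ (-s) * ρ ^ s) := by
      rw [Real.div_rpow hρ₀.le haq.le, Real.rpow_neg haq.le, div_eq_inv_mul]

theorem ofReal_rpow_le_of_forall_le (hF : Monotone F) (hq₀ : 0 < q) (hq₁ : q < 1) (hs : 0 ≤ s)
    (h : ∀ n : ℕ, ENNReal.ofReal ((q ^ n) ^ s) ≤ F (a * q ^ n)) (hρ₀ : 0 < ρ) (hρa : ρ ≤ a) :
    ENNReal.ofReal ((q / a) ^ s * ρ ^ s) ≤ F ρ := by
  obtain ⟨n, hlt, hle⟩ := exists_mul_pow_succ_lt_le hq₀ hq₁ hρ₀ hρa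
  have ha : 0 < a := hρ₀.trans_le hρa
  have hqn : q / a * ρ ≤ q ^ (n + 1) := by
    rw [div_mul_eq_mul_div, div_le_iff₀ ha, pow_succ']; nlinarith
  calc ENNReal.ofReal ((q / a) ^ s * ρ ^ s) = ENNReal.ofReal ((q / a * ρ) ^ s) := by
        rw [Real.mul_rpow (by positivity) hρ₀.le]
    _ ≤ ENNReal.ofReal ((q ^ (n + 1)) ^ s) := by gcongr
    _ ≤ F (a * q ^ (n + 1)) := h (n + 1)
    _ ≤ F ρ := hF hlt.le

end Monotone

theorem le_liminf_log_toReal_div_log {φ : ℝ → ℝ≥0∞} {A C M s : ℝ} (hA : 0 < A) (hC : 0 < C)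
    (hlow : ∀ᶠ δ in 𝓝[>] 0, ENNReal.ofReal (A * δ ^ M) ≤ φ δ)
    (hup : ∀ᶠ δ in 𝓝[>] 0, φ δ ≤ ENNReal.ofReal (C * δ ^ s)) :
    s ≤ liminf (fun δ => Real.log (φ δ).toReal / Real.log δ) (𝓝[>] 0) := by
  have hlog : Tendsto Real.log (𝓝[>] 0) atBot := Real.tendsto_log_nhdsGT_zero
  have log_mul_rpow : ∀ {B δ t : ℝ}, 0 < B → 0 < δ →
      Real.log (B * δ ^ t) = Real.log B + t * Real.log δ := fun hB hδ => by
    rw [Real.log_mul hB.ne' (Real.rpow_pos_of_pos hδ _).ne', Real.log_rpow hδ]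
  have hbounds : ∀ᶠ δ in 𝓝[>] 0,
      s + Real.log C / Real.log δ ≤ Real.log (φ δ).toReal / Real.log δ ∧
      Real.log (φ δ).toReal / Real.log δ ≤ M + Real.log A / Real.log δ := by
    filter_upwards [hlow, hup, self_mem_nhdsWithin, hlog.eventually_lt_atBot 0]
      with δ hlo hhi (hδ : 0 < δ) hlogδ
    have hlo' : A * δ ^ M ≤ (φ δ).toReal :=
      (ENNReal.ofReal_le_iff_le_toReal (ne_top_of_le_ne_top ENNReal.ofReal_ne_top hhi)).1 hlo
    have hhi' : (φ δ).toReal ≤ C * δ ^ s := ENNReal.toReal_le_of_le_ofReal (by positivity) hhi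
    have hApos : 0 < A * δ ^ M := by positivity
    have l₁ := Real.log_le_log hApos hlo'
    have l₂ := Real.log_le_log (hApos.trans_le hlo') hhi'
    rw [log_mul_rpow hA hδ] at l₁
    rw [log_mul_rpow hC hδ] at l₂
    constructor
    · rw [le_div_iff_of_neg hlogδ, add_mul, div_mul_cancel₀ _ hlogδ.ne]; linarith
    · rw [div_le_iff_of_neg hlogδ, add_mul, div_mul_cancel₀ _ hlogδ.ne]; linarith
  have hs : Tendsto (fun δ => s + Real.log C / Real.log δ) (𝓝[>] 0) (𝓝 s) := by
    simpa using tendsto_const_nhds.add (tendsto_const_nhds.div_atBot hlog)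
  have hM : Tendsto (fun δ => M + Real.log A / Real.log δ) (𝓝[>] 0) (𝓝 M) := by
    simpa using tendsto_const_nhds.add (tendsto_const_nhds.div_atBot hlog)
  calc s = liminf (fun δ => s + Real.log C / Real.log δ) (𝓝[>] 0) := hs.liminf_eq.symm
    _ ≤ _ := liminf_le_liminf (hbounds.mono fun _ h => h.1) hs.isBoundedUnder_ge
      (hM.isBoundedUnder_le.mono_le (hbounds.mono fun _ h => h.2)).isCoboundedUnder_flip

section words

def wordMap (g : ι → X → X) : {n : ℕ} → (Fin n → ι) → X → X
  | 0, _ => id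
  | _ + 1, w => g (w 0) ∘ wordMap g (Fin.tail w)

@[simp]
theorem wordMap_cons (g : ι → X → X) {n : ℕ} (i : ι) (w : Fin n → ι) :
    wordMap g (Fin.cons i w : Fin (n + 1) → ι) = g i ∘ wordMap g w := by
  simp [wordMap, Fin.tail_cons]

variable {g : ι → X → X} {K : Set X}

theorem mapsTo_wordMap (hmaps : ∀ i, MapsTo (g i) K K) :
    ∀ {n : ℕ} (w : Fin n → ι), MapsTo (wordMap g w) K K
  | 0, _ => mapsTo_id K
  | _ + 1, w => (hmaps (w 0)).comp (mapsTo_wordMap hmaps (Fin.tail w))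

theorem exists_wordMap_eq (hcover : K ⊆ ⋃ i, g i '' K) :
    ∀ (n : ℕ) {x : X}, x ∈ K → ∃ w : Fin n → ι, ∃ y ∈ K, wordMap g w y = x
  | 0, x, hx => ⟨Fin.elim0, x, hx, rfl⟩
  | n + 1, _, hx => by
    obtain ⟨i, y, hy, rfl⟩ := mem_iUnion.1 (hcover hx)
    obtain ⟨w, z, hz, rfl⟩ := exists_wordMap_eq hcover n hy
    exact ⟨Fin.cons i w, z, hz, by simp⟩

section metric

variable [PseudoMetricSpace X]

theorem dist_wordMap_le {R : ℝ} (hR : 0 ≤ R) (hmaps : ∀ i, MapsTo (g i) K K)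
    (hlip : ∀ i, ∀ x ∈ K, ∀ y ∈ K, dist (g i x) (g i y) ≤ R * dist x y) :
    ∀ {n : ℕ} (w : Fin n → ι) {x y : X}, x ∈ K → y ∈ K →
      dist (wordMap g w x) (wordMap g w y) ≤ R ^ n * dist x y
  | 0, _, _, _, _, _ => by simp [wordMap]
  | n + 1, w, x, y, hx, hy => calc
      dist (wordMap g w x) (wordMap g w y)
        ≤ R * dist (wordMap g (Fin.tail w) x) (wordMap g (Fin.tail w) y) :=
          hlip _ _ (mapsTo_wordMap hmaps _ hx) _ (mapsTo_wordMap hmaps _ hy)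
      _ ≤ R * (R ^ n * dist x y) := by gcongr; exact dist_wordMap_le hR hmaps hlip _ hx hy
      _ = R ^ (n + 1) * dist x y := by ring

theorem le_dist_wordMap {c : ℝ} (hc : 0 ≤ c) (hmaps : ∀ i, MapsTo (g i) K K)
    (hlow : ∀ i, ∀ x ∈ K, ∀ y ∈ K, c * dist x y ≤ dist (g i x) (g i y)) :
    ∀ {n : ℕ} (w : Fin n → ι) {x y : X}, x ∈ K → y ∈ K →
      c ^ n * dist x y ≤ dist (wordMap g w x) (wordMap g w y)
  | 0, _, _, _, _, _ => by simp [wordMap]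
  | n + 1, w, x, y, hx, hy => calc
      c ^ (n + 1) * dist x y = c * (c ^ n * dist x y) := by ring
      _ ≤ c * dist (wordMap g (Fin.tail w) x) (wordMap g (Fin.tail w) y) := by
          gcongr; exact le_dist_wordMap hc hmaps hlow _ hx hy
      _ ≤ dist (wordMap g w x) (wordMap g w y) :=
          hlow _ _ (mapsTo_wordMap hmaps _ hx) _ (mapsTo_wordMap hmaps _ hy)

theorem subset_iUnion_ball_wordMap (hmaps : ∀ i, MapsTo (g i) K K)
    (hcover : K ⊆ ⋃ i, g i '' K) {R : ℝ} (hR : 0 < R)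
    (hlip : ∀ i, ∀ x ∈ K, ∀ y ∈ K, dist (g i x) (g i y) ≤ R * dist x y)
    (hK : Bornology.IsBounded K) {x₀ : X} (hx₀ : x₀ ∈ K) (n : ℕ) :
    K ⊆ ⋃ w : Fin n → ι, ball (wordMap g w x₀) ((diam K + 1) * R ^ n) := by
  intro x hx
  obtain ⟨w, y, hy, rfl⟩ := exists_wordMap_eq hcover n hx
  refine mem_iUnion.2 ⟨w, mem_ball.2 ?_⟩
  calc dist (wordMap g w y) (wordMap g w x₀) ≤ R ^ n * dist y x₀ :=
        dist_wordMap_le hR.le hmaps hlip w hy hx₀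
    _ < (diam K + 1) * R ^ n := by
        rw [mul_comm]; gcongr; linarith [dist_le_diam_of_mem hK hy hx₀]

theorem disjoint_ball_or_disjoint_ball {A B : Set X} {ε : ℝ}
    (h : ∀ y ∈ A, ∀ z ∈ B, 2 * ε ≤ dist y z) (x : X) :
    Disjoint (ball x ε) A ∨ Disjoint (ball x ε) B := by
  by_contra! hAB
  obtain ⟨y, hyx, hyA⟩ := not_disjoint_iff.1 hAB.1
  obtain ⟨z, hzx, hzB⟩ := not_disjoint_iff.1 hAB.2
  have := dist_triangle_left y z x
  linarith [h y hyA z hzB, mem_ball'.1 hyx, mem_ball'.1 hzx]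

end metric

theorem exists_disjoint_ball_wordMap_image [MetricSpace X] (hmaps : ∀ i, MapsTo (g i) K K)
    (hcover : K ⊆ ⋃ i, g i '' K) {R : ℝ} (hR₀ : 0 ≤ R) (hR₁ : R < 1)
    (hlip : ∀ i, ∀ x ∈ K, ∀ y ∈ K, dist (g i x) (g i y) ≤ R * dist x y)
    (hK : Bornology.IsBounded K) (hKnt : K.Nontrivial) :
    ∃ n : ℕ, ∃ ε > 0, ∀ x, ∃ w : Fin (n + 1) → ι, Disjoint (ball x ε) (wordMap g w '' K) := by
  obtain ⟨a, ha, b, hb, hab⟩ := hKnt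
  have hD : 0 ≤ diam K := diam_nonneg
  obtain ⟨n, hn⟩ := exists_pow_lt_of_lt_one
    (show 0 < dist a b / (2 * (diam K + 1)) by have := dist_pos.2 hab; positivity) hR₁
  rw [lt_div_iff₀ (by positivity)] at hn
  have hsmall : R ^ (n + 1) * diam K ≤ R ^ n * (diam K + 1) :=
    mul_le_mul (pow_le_pow_of_le_one hR₀ hR₁.le n.le_succ) (by linarith) hD (pow_nonneg hR₀ n)
  have hnear : ∀ (w : Fin (n + 1) → ι) {x}, x ∈ K →
      ∀ y ∈ wordMap g w '' K, dist (wordMap g w x) y ≤ R ^ (n + 1) * diam K := by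
    rintro w x hx _ ⟨y, hy, rfl⟩
    exact (dist_wordMap_le hR₀ hmaps hlip w hx hy).trans
      (by gcongr; exact dist_le_diam_of_mem hK hx hy)
  obtain ⟨u, a', ha', rfl⟩ := exists_wordMap_eq hcover (n + 1) ha
  obtain ⟨v, b', hb', rfl⟩ := exists_wordMap_eq hcover (n + 1) hb
  refine ⟨n, (dist (wordMap g u a') (wordMap g v b') - 2 * (R ^ (n + 1) * diam K)) / 2,
    by linarith, fun x => ?_⟩
  refine (disjoint_ball_or_disjoint_ball (fun y hy z hz => ?_) x).elim (⟨u, ·⟩) (⟨v, ·⟩)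
  have := dist_triangle4 (wordMap g u a') y z (wordMap g v b')
  linarith [hnear u ha' y hy, hnear v hb' z hz, dist_comm z (wordMap g v b')]

theorem measurable_wordMap [MeasurableSpace X] (hg : ∀ i, Measurable (g i)) :
    ∀ {n : ℕ} (w : Fin n → ι), Measurable (wordMap g w)
  | 0, _ => measurable_id
  | _ + 1, w => (hg (w 0)).comp (measurable_wordMap hg (Fin.tail w))

theorem Fin.sum_pi_cons {M : Type*} [AddCommMonoid M] [Fintype ι] {n : ℕ}
    (F : (Fin (n + 1) → ι) → M) : ∑ w, F w = ∑ i, ∑ w : Fin n → ι, F (Fin.cons i w) := by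
  rw [← (Fin.consEquiv fun _ => ι).sum_comp, Fintype.sum_prod_type]
  rfl

theorem eq_sum_smul_map_wordMap [MeasurableSpace X] [Fintype ι] {μ : Measure X} {v : ι → ℝ≥0∞}
    (hg : ∀ i, Measurable (g i)) (hμ : μ = ∑ i, v i • μ.map (g i)) :
    ∀ n : ℕ, μ = ∑ w : Fin n → ι, (∏ t, v (w t)) • μ.map (wordMap g w)
  | 0 => by simp [wordMap]
  | n + 1 => by
    calc μ = ∑ i, v i • (∑ w : Fin n → ι, (∏ t, v (w t)) • μ.map (wordMap g w)).map (g i) := by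
          rw [← eq_sum_smul_map_wordMap hg hμ n]; exact hμ
      _ = ∑ w : Fin (n + 1) → ι, (∏ t, v (w t)) • μ.map (wordMap g w) := by
          simp only [Fin.sum_pi_cons, Fin.prod_univ_succ, Fin.cons_zero, Fin.cons_succ,
            wordMap_cons, Finset.smul_sum, Measure.map_finset_sum' (hg _).aemeasurable,
            Measure.map_smul, smul_smul, Measure.map_map (hg _) (measurable_wordMap hg _)]

end words

section measure

variable [MeasurableSpace X] [Fintype ι] {μ : Measure X} {φ : ι → X → X} {v : ι → ℝ≥0∞}

theorem measure_eq_sum_mul_preimage (hφ : ∀ i, Measurable (φ i))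
    (hμ : μ = ∑ i, v i • μ.map (φ i)) {B : Set X} (hB : MeasurableSet B) :
    μ B = ∑ i, v i * μ (φ i ⁻¹' B) := by
  conv_lhs => rw [hμ]
  simp only [Measure.coe_finsetSum, Finset.sum_apply, Measure.smul_apply, smul_eq_mul,
    Measure.map_apply (hφ _) hB]

theorem measure_le_one_sub_mul_of_preimage_null [IsProbabilityMeasure μ]
    (hφ : ∀ i, Measurable (φ i)) (hμ : μ = ∑ i, v i • μ.map (φ i)) {B : Set X}
    (hB : MeasurableSet B) {i₀ : ι} (h₀ : μ (φ i₀ ⁻¹' B) = 0) {t : ℝ≥0∞}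
    (ht : ∀ i, μ (φ i ⁻¹' B) ≤ t) : μ B ≤ (1 - v i₀) * t := by
  classical
  have hv : ∑ i, v i = 1 := by
    simpa using (measure_eq_sum_mul_preimage hφ hμ MeasurableSet.univ).symm
  have hsplit := Finset.sum_erase_add _ v (Finset.mem_univ i₀)
  have hv₀ : v i₀ ≠ ∞ := ne_top_of_le_ne_top ENNReal.one_ne_top
    (hv ▸ Finset.single_le_sum (fun i _ => zero_le) (Finset.mem_univ i₀))
  calc μ B = ∑ i ∈ Finset.univ.erase i₀, v i * μ (φ i ⁻¹' B) := by
        rw [measure_eq_sum_mul_preimage hφ hμ hB,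
          ← Finset.sum_erase_add _ _ (Finset.mem_univ i₀), h₀, mul_zero, add_zero]
    _ ≤ ∑ i ∈ Finset.univ.erase i₀, v i * t := by gcongr with i; exact ht i
    _ = (1 - v i₀) * t := by
      rw [← Finset.sum_mul, ← hv, ← hsplit, ENNReal.add_sub_cancel_right hv₀]

end measure

theorem preimage_ball_inter_subset_ball [PseudoMetricSpace X] {φ : X → X} {K : Set X} {c : ℝ}
    (hc : 0 < c) (hlow : ∀ x ∈ K, ∀ y ∈ K, c * dist x y ≤ dist (φ x) (φ y)) {x y : X} {r : ℝ}
    (hy : y ∈ φ ⁻¹' ball x r ∩ K) : φ ⁻¹' ball x r ∩ K ⊆ ball y (2 * r / c) := by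
  rintro z ⟨hz, hzK⟩
  rw [mem_ball, lt_div_iff₀ hc, mul_comm]
  calc c * dist z y ≤ dist (φ z) (φ y) := hlow z hzK y hy.2
    _ ≤ dist (φ z) x + dist (φ y) x := dist_triangle_right _ _ _
    _ < 2 * r := by linarith [mem_ball.1 hz, mem_ball.1 hy.1]

section decay

variable [PseudoMetricSpace X] [MeasurableSpace X] [OpensMeasurableSpace X] [Fintype ι]
  {μ : Measure X} [IsProbabilityMeasure μ] {φ : ι → X → X} {v : ι → ℝ≥0∞}

theorem measure_ball_le_one_sub_pow (hφ : ∀ i, Measurable (φ i))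
    (hμ : μ = ∑ i, v i • μ.map (φ i)) {K : Set X} (hK : μ Kᶜ = 0) {c : ℝ} (hc₀ : 0 < c)
    (hc₁ : c ≤ 1) (hlow : ∀ i, ∀ x ∈ K, ∀ y ∈ K, c * dist x y ≤ dist (φ i x) (φ i y))
    {π : ℝ≥0∞} (hπ : ∀ i, π ≤ v i) {a : ℝ} (ha : 0 ≤ a)
    (hsep : ∀ x, ∃ i, Disjoint (ball x a) (φ i '' K)) :
    ∀ (n : ℕ) (x : X), μ (ball x (a * (c / 2) ^ n)) ≤ (1 - π) ^ n
  | 0, x => by simpa using prob_le_one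
  | n + 1, x => by
    obtain ⟨i₀, hi₀⟩ := hsep x
    have hsub : ball x (a * (c / 2) ^ (n + 1)) ⊆ ball x a :=
      ball_subset_ball (mul_le_of_le_one_right ha (pow_le_one₀ (by positivity) (by linarith)))
    refine (measure_le_one_sub_mul_of_preimage_null (i₀ := i₀) (t := (1 - π) ^ n) hφ hμ
      measurableSet_ball ?_ fun i => ?_).trans ?_
    · have hempty : φ i₀ ⁻¹' ball x (a * (c / 2) ^ (n + 1)) ∩ K = ∅ :=
        eq_empty_of_forall_notMem fun z ⟨hz, hzK⟩ =>
          hi₀.ne_of_mem (hsub hz) (mem_image_of_mem _ hzK) rfl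
      rw [← measure_inter_conull hK, hempty, measure_empty]
    · rw [← measure_inter_conull hK]
      rcases (φ i ⁻¹' ball x (a * (c / 2) ^ (n + 1)) ∩ K).eq_empty_or_nonempty with he | ⟨y, hy⟩
      · simp [he]
      have hr : 2 * (a * (c / 2) ^ (n + 1)) / c = a * (c / 2) ^ n := by
        rw [pow_succ]; field_simp
      exact (measure_mono (hr ▸ preimage_ball_inter_subset_ball hc₀ (hlow i) hy)).trans
        (measure_ball_le_one_sub_pow hφ hμ hK hc₀ hc₁ hlow hπ ha hsep n y)
    · rw [pow_succ']
      gcongr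
      exact hπ i₀

end decay

theorem one_le_card_mul_iSup_measure_ball [PseudoMetricSpace X] [MeasurableSpace X] [Fintype ι]
    {μ : Measure X} [IsProbabilityMeasure μ] {K : Set X} (hK : μ Kᶜ = 0) {y : ι → X} {δ : ℝ}
    (hcover : K ⊆ ⋃ i, ball (y i) δ) : 1 ≤ Fintype.card ι * ⨆ x, μ (ball x δ) :=
  calc 1 = μ univ := measure_univ.symm
    _ ≤ μ (⋃ i, ball (y i) δ) :=
        measure_mono_ae (ae_le_set.2 (measure_mono_null (fun z hz hzK => hz.2 (hcover hzK)) hK))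
    _ ≤ ∑ i, μ (ball (y i) δ) := measure_iUnion_fintype_le _ _
    _ ≤ ∑ _i : ι, ⨆ x, μ (ball x δ) := by gcongr with i; exact le_iSup (fun x => μ (ball x δ)) _
    _ = Fintype.card ι * ⨆ x, μ (ball x δ) := by simp

section attractor

variable [MetricSpace X] [MeasurableSpace X] [Fintype ι] {μ : Measure X}
  [IsProbabilityMeasure μ] {g : ι → X → X} {K : Set X}

theorem exists_measure_ball_le_rpow [OpensMeasurableSpace X] (hg : ∀ i, Measurable (g i))
    (hmaps : ∀ i, MapsTo (g i) K K) (hcover : K ⊆ ⋃ i, g i '' K) (hKb : Bornology.IsBounded K)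
    (hK : μ Kᶜ = 0) {R : ℝ} (hR₀ : 0 ≤ R) (hR₁ : R < 1)
    (hlip : ∀ i, ∀ x ∈ K, ∀ y ∈ K, dist (g i x) (g i y) ≤ R * dist x y) {c : ℝ} (hc₀ : 0 < c)
    (hc₁ : c ≤ 1) (hlow : ∀ i, ∀ x ∈ K, ∀ y ∈ K, c * dist x y ≤ dist (g i x) (g i y))
    {p : ι → ℝ} {π : ℝ} (hπ₀ : 0 < π) (hπ₁ : π < 1) (hπ : ∀ i, π ≤ p i)
    (hμ : μ = ∑ i, ENNReal.ofReal (p i) • μ.map (g i)) (hKnt : K.Nontrivial) :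
    ∃ s > (0 : ℝ), ∃ C > (0 : ℝ), ∃ r₀ > (0 : ℝ), ∀ x : X, ∀ ρ : ℝ, 0 < ρ → ρ ≤ r₀ →
      μ (ball x ρ) ≤ ENNReal.ofReal (C * ρ ^ s) := by
  obtain ⟨n, ε, hε, hsep⟩ :=
    exists_disjoint_ball_wordMap_image hmaps hcover hR₀ hR₁ hlip hKb hKnt
  have hq₀ : 0 < c ^ (n + 1) / 2 := by positivity
  have hq₁ : c ^ (n + 1) / 2 < 1 := by linarith [pow_le_one₀ hc₀.le hc₁ (n := n + 1)]
  have hγ₀ : 0 < 1 - π ^ (n + 1) := by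
    linarith [pow_lt_one₀ hπ₀.le hπ₁ (Nat.add_one_ne_zero n)]
  have hγ₁ : 1 - π ^ (n + 1) < 1 := by linarith [pow_pos hπ₀ (n + 1)]
  set q := c ^ (n + 1) / 2
  set γ := 1 - π ^ (n + 1)
  have hs : 0 < Real.logb q γ := Real.logb_pos_of_base_lt_one hq₀ hq₁ hγ₀ hγ₁
  have hdecay : ∀ j x, μ (ball x (ε * q ^ j)) ≤ ENNReal.ofReal ((q ^ j) ^ Real.logb q γ) := by
    intro j x
    rw [← Real.rpow_pow_comm hq₀.le, Real.rpow_logb hq₀ hq₁.ne hγ₀, ENNReal.ofReal_pow hγ₀.le,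
      ENNReal.ofReal_sub _ (by positivity), ENNReal.ofReal_one, ENNReal.ofReal_pow hπ₀.le]
    refine measure_ball_le_one_sub_pow (measurable_wordMap hg)
      (eq_sum_smul_map_wordMap hg hμ (n + 1)) hK (pow_pos hc₀ _) (pow_le_one₀ hc₀.le hc₁)
      (fun w x hx y hy => le_dist_wordMap hc₀.le hmaps hlow w hx hy) (fun w => ?_) hε.le hsep j x
    simpa using Finset.pow_card_le_prod Finset.univ (fun t => ENNReal.ofReal (p (w t))) _
      fun t _ => ENNReal.ofReal_le_ofReal (hπ (w t))
  refine ⟨Real.logb q γ, hs, (ε * q) ^ (-Real.logb q γ), by positivity, ε, hε,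
    fun x ρ hρ₀ hρ => ?_⟩
  exact Monotone.le_ofReal_rpow_of_forall_le (fun _ _ h => measure_mono (ball_subset_ball h))
    hq₀ hq₁ hs.le (hdecay · x) hρ₀ hρ

theorem exists_rpow_le_iSup_measure_ball (hmaps : ∀ i, MapsTo (g i) K K)
    (hcover : K ⊆ ⋃ i, g i '' K) (hKb : Bornology.IsBounded K) (hK : μ Kᶜ = 0)
    (hKne : K.Nonempty) {R : ℝ} (hR₀ : 0 < R) (hR₁ : R < 1)
    (hlip : ∀ i, ∀ x ∈ K, ∀ y ∈ K, dist (g i x) (g i y) ≤ R * dist x y) :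
    ∃ A > (0 : ℝ), ∃ M : ℝ, ∃ r₀ > (0 : ℝ), ∀ δ : ℝ, 0 < δ → δ ≤ r₀ →
      ENNReal.ofReal (A * δ ^ M) ≤ ⨆ x, μ (ball x δ) := by
  classical
  obtain ⟨x₀, hx₀⟩ := hKne
  have hN : 0 < Fintype.card ι := by
    obtain ⟨i, -⟩ := mem_iUnion.1 (hcover hx₀)
    exact Fintype.card_pos_iff.2 ⟨i⟩
  have hM : 0 ≤ Real.logb R (Fintype.card ι)⁻¹ :=
    Real.logb_nonneg_of_base_lt_one hR₀ hR₁ (by positivity)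
      (inv_le_one_of_one_le₀ (by exact_mod_cast hN))
  have hcount : ∀ n : ℕ, ENNReal.ofReal ((R ^ n) ^ Real.logb R (Fintype.card ι)⁻¹) ≤
      ⨆ x, μ (ball x ((diam K + 1) * R ^ n)) := by
    intro n
    rw [← Real.rpow_pow_comm hR₀.le, Real.rpow_logb hR₀ hR₁.ne (by positivity), inv_pow,
      ENNReal.ofReal_inv_of_pos (by positivity), ← Nat.cast_pow, ENNReal.ofReal_natCast,
      ENNReal.inv_le_iff_le_mul (fun _ => by positivity) (by simp)]
    simpa using one_le_card_mul_iSup_measure_ball hK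
      (subset_iUnion_ball_wordMap hmaps hcover hR₀ hlip hKb hx₀ n)
  refine ⟨(R / (diam K + 1)) ^ Real.logb R (Fintype.card ι)⁻¹, by positivity,
    Real.logb R (Fintype.card ι)⁻¹, diam K + 1, by positivity, fun δ hδ₀ hδ => ?_⟩
  exact Monotone.ofReal_rpow_le_of_forall_le (F := fun ρ => ⨆ x, μ (ball x ρ))
    (fun _ _ h => iSup_mono fun x => measure_mono (ball_subset_ball h)) hR₀ hR₁ hM hcount hδ₀ hδ

end attractor

theorem ContinuousOn.exists_measurable_eqOn [TopologicalSpace X] [MeasurableSpace X]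
    [BorelSpace X] {f : X → X} {K : Set X} (hf : ContinuousOn f K) (hK : MeasurableSet K) :
    ∃ g : X → X, Measurable g ∧ EqOn g f K := by
  classical
  exact ⟨K.piecewise f id, hf.measurable_piecewise continuousOn_id hK, piecewise_eqOn _ _ _⟩

end

theorem ifs_invariant_measure_upper_regular_general
    {X : Type*} [MetricSpace X] [MeasurableSpace X] [BorelSpace X]
    (Ω : Set X)
    (m : ℕ) (f : Fin m → X → X) (c r : Fin m → ℝ)
    (hc : ∀ i, 0 < c i) (hr : ∀ i, r i < 1)
    (hbl : ∀ i, ∀ p ∈ closure Ω, ∀ q ∈ closure Ω,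
      c i * dist p q ≤ dist (f i p) (f i q) ∧ dist (f i p) (f i q) ≤ r i * dist p q)
    (p : Fin m → ℝ) (hp : ∀ i, 0 < p i)
    (μ : Measure X) [IsProbabilityMeasure μ]
    (hinv : μ = ∑ i, ENNReal.ofReal (p i) • Measure.map (f i) μ)
    (K : Set X) (hKc : IsCompact K) (hKne : K.Nonempty) (hKΩ : K ⊆ closure Ω)
    (hKinv : K = ⋃ i, f i '' K)
    (hμK : μ Kᶜ = 0)
    (hKns : ¬∃ x, K = {x}) :
    (∃ s > (0 : ℝ), ∃ C > (0 : ℝ), ∃ r₀ > (0 : ℝ), ∀ x : X, ∀ ρ : ℝ, 0 < ρ → ρ ≤ r₀ →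
        μ (ball x ρ) ≤ ENNReal.ofReal (C * ρ ^ s)) ∧
      0 < Filter.liminf
        (fun δ : ℝ => Real.log ((⨆ x : X, μ (ball x δ)).toReal) / Real.log δ)
        (nhdsWithin 0 (Set.Ioi 0)) := by
  obtain ⟨R, ⟨hR₀, hR₁⟩, hrR⟩ := exists_mem_Ioo_forall_lt zero_lt_one hr
  obtain ⟨c₀, ⟨hc₀, hc₁⟩, hcc⟩ := exists_mem_Ioo_forall_gt zero_lt_one hc
  obtain ⟨π, ⟨hπ₀, hπ₁⟩, hpπ⟩ := exists_mem_Ioo_forall_gt zero_lt_one hp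
  -- `μ` lives on `K`, so modifying the `f i` off `K` to make them Borel changes no pushforward.
  choose g hg hgf using fun i => ContinuousOn.exists_measurable_eqOn
    (LipschitzOnWith.of_dist_le' fun x hx y hy => (hbl i x (hKΩ hx) y (hKΩ hy)).2).continuousOn
    hKc.isClosed.measurableSet
  have hKg : K = ⋃ i, g i '' K := by simpa only [(hgf _).image_eq] using hKinv
  have hmaps : ∀ i, MapsTo (g i) K K := fun i =>
    mapsTo_iff_image_subset.2 ((subset_iUnion (fun i => g i '' K) i).trans hKg.symm.subset)
  have hlip : ∀ i, ∀ x ∈ K, ∀ y ∈ K, dist (g i x) (g i y) ≤ R * dist x y := fun i x hx y hy => by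
    rw [hgf i hx, hgf i hy]
    exact (hbl i x (hKΩ hx) y (hKΩ hy)).2.trans (by gcongr; exact (hrR i).le)
  have hlow : ∀ i, ∀ x ∈ K, ∀ y ∈ K, c₀ * dist x y ≤ dist (g i x) (g i y) := fun i x hx y hy => by
    rw [hgf i hx, hgf i hy]
    exact (mul_le_mul_of_nonneg_right (hcc i).le dist_nonneg).trans
      (hbl i x (hKΩ hx) y (hKΩ hy)).1
  have hμg : μ = ∑ i, ENNReal.ofReal (p i) • μ.map (g i) := hinv.trans <| Finset.sum_congr rfl
    fun i _ => by rw [Measure.map_congr (eventuallyEq_of_mem (mem_ae_iff.2 hμK) (hgf i))]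
  have hKnt : K.Nontrivial := (nontrivial_iff_ne_singleton hKne.some_mem).2 fun h => hKns ⟨_, h⟩
  obtain ⟨s, hs, C, hC, r₀, hr₀, hup⟩ := exists_measure_ball_le_rpow hg hmaps hKg.subset
    hKc.isBounded hμK hR₀.le hR₁ hlip hc₀ hc₁.le hlow hπ₀ hπ₁ (fun i => (hpπ i).le) hμg hKnt
  obtain ⟨A, hA, M, r₁, hr₁, hdown⟩ :=
    exists_rpow_le_iSup_measure_ball hmaps hKg.subset hKc.isBounded hμK hKne hR₀ hR₁ hlip
  refine ⟨⟨s, hs, C, hC, r₀, hr₀, hup⟩,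
    hs.trans_le (le_liminf_log_toReal_div_log (M := M) hA hC ?_ ?_)⟩
  · filter_upwards [Ioc_mem_nhdsGT hr₁] with δ hδ using hdown δ hδ.1 hδ.2
  · filter_upwards [Ioc_mem_nhdsGT hr₀] with δ hδ using iSup_le fun x => hup x δ hδ.1 hδ.2

/-- the invariant measure of an IFS of bi-Lipschitz contractions on the
closure of a bounded open set, whose attractor is not a singleton, is upper `s`-regular
for some `s > 0`; in particular its lower `L∞`-dimension is strictly positive. -/
theorem ifs_invariant_measure_upper_regular
    {X : Type*} [MetricSpace X] [CompleteSpace X] [MeasurableSpace X] [BorelSpace X]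
    (Ω : Set X) (hΩo : IsOpen Ω) (hΩb : Bornology.IsBounded Ω)
    (m : ℕ) (hm : 0 < m) (f : Fin m → X → X) (c r : Fin m → ℝ)
    (hc : ∀ i, 0 < c i) (hcr : ∀ i, c i ≤ r i) (hr : ∀ i, r i < 1)
    (hmaps : ∀ i, Set.MapsTo (f i) (closure Ω) (closure Ω))
    (hbl : ∀ i, ∀ p ∈ closure Ω, ∀ q ∈ closure Ω,
      c i * dist p q ≤ dist (f i p) (f i q) ∧ dist (f i p) (f i q) ≤ r i * dist p q)
    (p : Fin m → ℝ) (hp : ∀ i, 0 < p i) (hpsum : ∑ i, p i = 1)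
    (μ : Measure X) [IsProbabilityMeasure μ]
    (hinv : μ = ∑ i, ENNReal.ofReal (p i) • Measure.map (f i) μ)
    (K : Set X) (hKc : IsCompact K) (hKne : K.Nonempty) (hKΩ : K ⊆ closure Ω)
    (hKinv : K = ⋃ i, f i '' K)
    (hμK : μ Kᶜ = 0)
    (hKns : ¬∃ x, K = {x}) :
    (∃ s > (0 : ℝ), ∃ C > (0 : ℝ), ∃ r₀ > (0 : ℝ), ∀ x : X, ∀ ρ : ℝ, 0 < ρ → ρ ≤ r₀ →
        μ (ball x ρ) ≤ ENNReal.ofReal (C * ρ ^ s)) ∧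
      0 < Filter.liminf
        (fun δ : ℝ => Real.log ((⨆ x : X, μ (ball x δ)).toReal) / Real.log δ)
        (nhdsWithin 0 (Set.Ioi 0)) :=
  ifs_invariant_measure_upper_regular_general Ω m f c r hc hr hbl p hp μ hinv K hKc hKne hKΩ hKinv
    hμK hKns
end
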